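/- arXiv:1905.12091 — 5 statements merged into one kernel-verified Lean document; each statement's English description precedes it below -/
import Mathlib

section
/- Let u, s_1, s_2, …, s_k be unit vectors in ℝ^d, let α_1,…,α_k ∈ ℝ with Σ_i α_i² > 0, and let z ∈ ℝ^d satisfy u = Σ_i α_i s_i + z. Let T be a linear subspace of ℝ^d, let Π_T denote orthogonal projection onto T, and set θ = ‖u − Π_T u‖. Then Σ_{i=1}^k ⟨u − Π_T u, s_i⟩² ≥ (θ² − ‖z‖²)₊² / (4 Σ_i α_i²), where (β)₊ denotes max(0, β). -/
/-!
Write `w = u - Π_T u`. Since `w ⟂ T`, `⟪w, u⟫ = ‖w‖² = θ²`; expanding `u = Σ αᵢ sᵢ + z` and bounding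
`⟪w, z⟫ ≤ θ ‖z‖ ≤ (θ² + ‖z‖²) / 2` gives `θ² - ‖z‖² ≤ 2 Σ αᵢ ⟪w, sᵢ⟫`, and Cauchy–Schwarz bounds the
square of the right-hand side by `4 (Σ αᵢ²) (Σ ⟪w, sᵢ⟫²)`.
-/

open Finset RealInnerProductSpace

variable {E : Type*} [NormedAddCommGroup E] [InnerProductSpace ℝ E]

theorem Submodule.inner_sub_starProjection_self (K : Submodule ℝ E) [K.HasOrthogonalProjection]
    (v : E) : ⟪v - K.starProjection v, v⟫ = ‖v - K.starProjection v‖ ^ 2 := by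
  have hperp : ⟪v - K.starProjection v, K.starProjection v⟫ = 0 :=
    K.starProjection_inner_eq_zero v _ (K.starProjection_apply_mem v)
  calc ⟪v - K.starProjection v, v⟫
      = ⟪v - K.starProjection v, (v - K.starProjection v) + K.starProjection v⟫ := by
        rw [sub_add_cancel]
    _ = ‖v - K.starProjection v‖ ^ 2 := by
        rw [inner_add_right, hperp, add_zero, real_inner_self_eq_norm_sq]

theorem sq_norm_sub_sq_norm_le_two_mul_sum_inner {ι : Type*} (t : Finset ι) (w z : E)
    (s : ι → E) (α : ι → ℝ) (hw : ⟪w, ∑ i ∈ t, α i • s i + z⟫ = ‖w‖ ^ 2) :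
    ‖w‖ ^ 2 - ‖z‖ ^ 2 ≤ 2 * ∑ i ∈ t, α i * ⟪w, s i⟫ := by
  have hexpand : ‖w‖ ^ 2 = ∑ i ∈ t, α i * ⟪w, s i⟫ + ⟪w, z⟫ := by
    simp only [← hw, inner_add_right, inner_sum, real_inner_smul_right]
  nlinarith [real_inner_le_norm w z, sq_nonneg (‖w‖ - ‖z‖)]

theorem max_zero_sq_div_four_sum_sq_le {ι : Type*} (t : Finset ι) (α b : ι → ℝ) {c : ℝ}
    (hc : c ≤ 2 * ∑ i ∈ t, α i * b i) :
    max 0 c ^ 2 / (4 * ∑ i ∈ t, α i ^ 2) ≤ ∑ i ∈ t, b i ^ 2 := by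
  rcases le_or_gt c 0 with hc0 | hc0
  · rw [max_eq_left hc0, sq, zero_mul, zero_div]
    exact sum_nonneg fun i _ ↦ sq_nonneg (b i)
  rw [max_eq_right hc0.le]
  set A := ∑ i ∈ t, α i * b i
  have hcs : A ^ 2 ≤ (∑ i ∈ t, α i ^ 2) * ∑ i ∈ t, b i ^ 2 := sum_mul_sq_le_sq_mul_sq t α b
  have hS : 0 < ∑ i ∈ t, α i ^ 2 := by
    refine (sum_nonneg fun i _ ↦ sq_nonneg (α i)).lt_of_ne fun hS ↦ ?_
    rw [← hS, zero_mul] at hcs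
    nlinarith
  rw [div_le_iff₀ (by positivity)]
  nlinarith

theorem stmt_5_general (d k : ℕ) (u : EuclideanSpace ℝ (Fin d))
    (s : Fin k → EuclideanSpace ℝ (Fin d))
    (α : Fin k → ℝ)
    (z : EuclideanSpace ℝ (Fin d)) (hdecomp : u = (∑ i, α i • s i) + z)
    (T : Submodule ℝ (EuclideanSpace ℝ (Fin d))) (θ : ℝ)
    (hθ : θ = ‖u - (Submodule.orthogonalProjectionOnto T u : EuclideanSpace ℝ (Fin d))‖) :
    ∑ i, (inner ℝ (u - (Submodule.orthogonalProjectionOnto T u : EuclideanSpace ℝ (Fin d))) (s i) : ℝ) ^ 2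
      ≥ (max 0 (θ ^ 2 - ‖z‖ ^ 2)) ^ 2 / (4 * ∑ i, (α i) ^ 2) := by
  have hwu : ⟪u - T.starProjection u, ∑ i, α i • s i + z⟫ = ‖u - T.starProjection u‖ ^ 2 :=
    hdecomp ▸ T.inner_sub_starProjection_self u
  rw [hθ]
  exact max_zero_sq_div_four_sum_sq_le univ α _
    (sq_norm_sub_sq_norm_le_two_mul_sum_inner univ _ z s α hwu)

/-- Increment lemma: if the unit vector `u = Σ αᵢ sᵢ + z` with unit vectors `sᵢ`,
and `θ = ‖u − Π_T u‖`, then `Σ ⟨u − Π_T u, sᵢ⟩² ≥ (θ² − ‖z‖²)₊² / (4 Σ αᵢ²)`. -/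
theorem stmt_5 (d k : ℕ) (u : EuclideanSpace ℝ (Fin d)) (hu : ‖u‖ = 1)
    (s : Fin k → EuclideanSpace ℝ (Fin d)) (hs : ∀ i, ‖s i‖ = 1)
    (α : Fin k → ℝ) (hα : 0 < ∑ i, (α i) ^ 2)
    (z : EuclideanSpace ℝ (Fin d)) (hdecomp : u = (∑ i, α i • s i) + z)
    (T : Submodule ℝ (EuclideanSpace ℝ (Fin d))) (θ : ℝ)
    (hθ : θ = ‖u - (Submodule.orthogonalProjectionOnto T u : EuclideanSpace ℝ (Fin d))‖) :
    ∑ i, (inner ℝ (u - (Submodule.orthogonalProjectionOnto T u : EuclideanSpace ℝ (Fin d))) (s i) : ℝ) ^ 2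
      ≥ (max 0 (θ ^ 2 - ‖z‖ ^ 2)) ^ 2 / (4 * ∑ i, (α i) ^ 2) :=
  stmt_5_general d k u s α z hdecomp T θ hθ
end

section
/- Let d, n, m, k be positive integers, and let Λ > 0, ε > 0, α, β ∈ (0,1]. Let x_1,…,x_n ∈ ℝ^d be nonzero vectors, let a_1,…,a_m ∈ ℝ^d be unit vectors, and let y_1,…,y_n ∈ ℝ^m each have at most k nonzero entries and satisfy ‖y_i‖² ≤ Λ‖x_i‖². For each i let T_i be a linear subspace of ℝ^d and set z_i = x_i − Π_{T_i} x_i. Define W = Σ_i ‖x_i‖², γ* = (1/W) Σ_i ‖x_i − Σ_j y_i(j) a_j‖², ψ = (1/W) Σ_i ‖z_i‖², and τ = ε²/(16kΛ). Suppose ψ ≥ γ* + ε, and suppose v ∈ ℝ^d is a unit vector satisfying the (α,β)-approximation guarantee for the τ-TC instance with vectors z_i/‖x_i‖ and weights ‖x_i‖², i.e., Σ_{i : ⟨z_i,v⟩² ≥ ατ‖x_i‖²} ⟨z_i,v⟩² ≥ β · sup_{‖u‖=1} Σ_{i : ⟨z_i,u⟩² ≥ τ‖x_i‖²} ⟨z_i,u⟩².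 Then Σ_{i : ⟨z_i,v⟩² ≥ ατ‖x_i‖²} ⟨z_i,v⟩² ≥ (β (ψ − γ*)² / (16mΛ)) · W. -/
/-!
Write `r_i = x_i - ∑_j y_i(j) a_j`. As `z_i ⊥ x_i - z_i`, expanding `‖z_i - r_i‖² ≥ 0` gives
`‖z_i‖² - ‖r_i‖² ≤ 2 ∑_j y_i(j) ⟪z_i, a_j⟫`, so the correlations `y_i(j) ⟪z_i, a_j⟫` sum to at least
`(ψ - γ*) W / 2`. Those with `⟪z_i, a_j⟫² < τ‖x_i‖²` sum to at most `εW/4` by Cauchy–Schwarz on the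
`k`-sparse rows `y_i`, since `kτΛ = ε²/16`; hence the others sum to at least `(ψ - γ*) W / 4`. By
Cauchy–Schwarz once more, the square of that sum is at most `ΛW ∑_j TC(a_j)`, and `TC(a_j)` is at
most the supremum over unit vectors.
-/

open Finset RealInnerProductSpace

theorem sq_sum_sum_mul_le {ι κ : Type*} [Fintype ι] [Fintype κ] (f g : ι → κ → ℝ) :
    (∑ i, ∑ j, f i j * g i j) ^ 2 ≤ (∑ i, ∑ j, f i j ^ 2) * ∑ i, ∑ j, g i j ^ 2 := by
  simpa only [Fintype.sum_prod_type] using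
    sum_mul_sq_le_sq_mul_sq univ (fun p : ι × κ => f p.1 p.2) (fun p => g p.1 p.2)

theorem sq_sum_mul_ite_sq_lt_le {κ : Type*} [Fintype κ] {y c : κ → ℝ} {k : ℕ} {t : ℝ}
    (hy : #{j | y j ≠ 0} ≤ k) (ht : 0 ≤ t) :
    (∑ j, y j * if c j ^ 2 < t then c j else 0) ^ 2 ≤ k * t * ∑ j, y j ^ 2 := by
  set g : κ → ℝ := fun j => if c j ^ 2 < t then c j else 0
  set s : Finset κ := {j | y j ≠ 0}
  have hsupp : ∑ j, y j * g j = ∑ j ∈ s, y j * g j :=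
    (sum_subset (subset_univ s) fun j _ hj => by simp_all [s]).symm
  have hg : ∀ j, g j ^ 2 ≤ t := fun j => by
    simp only [g]
    split_ifs with h
    · exact h.le
    · simp [ht]
  have hgs : ∑ j ∈ s, g j ^ 2 ≤ k * t :=
    calc ∑ j ∈ s, g j ^ 2 ≤ #s * t := by simpa using sum_le_card_nsmul s _ t fun j _ => hg j
      _ ≤ k * t := by gcongr
  calc (∑ j, y j * g j) ^ 2 = (∑ j ∈ s, y j * g j) ^ 2 := by rw [hsupp]
    _ ≤ (∑ j ∈ s, y j ^ 2) * ∑ j ∈ s, g j ^ 2 := sum_mul_sq_le_sq_mul_sq s y g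
    _ ≤ (∑ j, y j ^ 2) * (k * t) :=
        mul_le_mul (sum_le_sum_of_subset_of_nonneg (subset_univ s) fun j _ _ => sq_nonneg _) hgs
          (sum_nonneg fun j _ => sq_nonneg _) (sum_nonneg fun j _ => sq_nonneg _)
    _ = k * t * ∑ j, y j ^ 2 := mul_comm _ _

section InnerProductSpace

variable {ι κ E : Type*} [Fintype ι] [Fintype κ] [NormedAddCommGroup E] [InnerProductSpace ℝ E]

/-- The τ-TC objective of `u` for the vectors `z i / ‖x i‖` with weights `‖x i‖ ^ 2`, with the
normalisation cleared. -/
noncomputable def tcObjective (τ : ℝ) (x z : ι → E) (u : E) : ℝ :=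
  ∑ i, if τ * ‖x i‖ ^ 2 ≤ ⟪z i, u⟫ ^ 2 then ⟪z i, u⟫ ^ 2 else 0

theorem tcObjective_nonneg (τ : ℝ) (x z : ι → E) (u : E) : 0 ≤ tcObjective τ x z u :=
  sum_nonneg fun i _ => by split_ifs <;> positivity

theorem tcObjective_le_sum_sq_norm (τ : ℝ) (x z : ι → E) {u : E} (hu : ‖u‖ = 1) :
    tcObjective τ x z u ≤ ∑ i, ‖z i‖ ^ 2 := by
  refine sum_le_sum fun i _ => ?_
  have : ⟪z i, u⟫ ^ 2 ≤ ‖z i‖ ^ 2 :=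
    sq_le_sq.2 (by simpa [hu] using abs_real_inner_le_norm (z i) u)
  split_ifs
  · exact this
  · positivity

theorem sum_tcObjective_le_card_mul_iSup (τ : ℝ) (x z : ι → E) {a : κ → E}
    (ha : ∀ j, ‖a j‖ = 1) :
    ∑ j, tcObjective τ x z (a j) ≤
      Fintype.card κ * ⨆ u : {u : E // ‖u‖ = 1}, tcObjective τ x z u := by
  have hbdd : BddAbove (Set.range fun u : {u : E // ‖u‖ = 1} => tcObjective τ x z u) :=
    ⟨_, Set.forall_mem_range.2 fun u => tcObjective_le_sum_sq_norm τ x z u.2⟩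
  simpa using sum_le_card_nsmul univ _ _ fun j _ => le_ciSup hbdd ⟨a j, ha j⟩

theorem sq_norm_sub_sq_norm_sub_le_two_inner {x z w : E} (hz : ⟪z, x - z⟫ = 0) :
    ‖z‖ ^ 2 - ‖x - w‖ ^ 2 ≤ 2 * ⟪z, w⟫ := by
  rw [inner_sub_right, real_inner_self_eq_norm_sq, sub_eq_zero] at hz
  have h := norm_sub_sq_real z (x - w)
  rw [inner_sub_right, hz] at h
  linarith [sq_nonneg ‖z - (x - w)‖]

theorem sum_sq_norm_sub_le_two_mul_sum_inner {x z : ι → E} (hz : ∀ i, ⟪z i, x i - z i⟫ = 0)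
    (y : ι → κ → ℝ) (a : κ → E) :
    ∑ i, ‖z i‖ ^ 2 - ∑ i, ‖x i - ∑ j, y i j • a j‖ ^ 2 ≤
      2 * ∑ i, ∑ j, y i j * ⟪z i, a j⟫ := by
  rw [← sum_sub_distrib, mul_sum]
  refine sum_le_sum fun i _ => ?_
  simpa only [inner_sum, real_inner_smul_right] using
    sq_norm_sub_sq_norm_sub_le_two_inner (w := ∑ j, y i j • a j) (hz i)

theorem sq_sum_sub_le_mul_sum_tcObjective {k : ℕ} {τ Λ ε : ℝ} {x z : ι → E} {a : κ → E}
    {y : ι → κ → ℝ} (hz : ∀ i, ⟪z i, x i - z i⟫ = 0) (hy : ∀ i, #{j | y i j ≠ 0} ≤ k)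
    (hyx : ∀ i, ∑ j, y i j ^ 2 ≤ Λ * ‖x i‖ ^ 2) (hτ : 0 ≤ τ) (hε : 0 ≤ ε)
    (hkτΛ : k * τ * Λ ≤ ε ^ 2 / 16)
    (hgap : ε * ∑ i, ‖x i‖ ^ 2 ≤ ∑ i, ‖z i‖ ^ 2 - ∑ i, ‖x i - ∑ j, y i j • a j‖ ^ 2) :
    (∑ i, ‖z i‖ ^ 2 - ∑ i, ‖x i - ∑ j, y i j • a j‖ ^ 2) ^ 2 ≤
      16 * Λ * (∑ i, ‖x i‖ ^ 2) * ∑ j, tcObjective τ x z (a j) := by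
  set D := ∑ i, ‖z i‖ ^ 2 - ∑ i, ‖x i - ∑ j, y i j • a j‖ ^ 2
  set c : ι → κ → ℝ := fun i j => ⟪z i, a j⟫
  set L := ∑ i, ∑ j, y i j * if τ * ‖x i‖ ^ 2 ≤ c i j ^ 2 then c i j else 0
  set M := ∑ i, ∑ j, y i j * if c i j ^ 2 < τ * ‖x i‖ ^ 2 then c i j else 0
  have hsplit : ∑ i, ∑ j, y i j * c i j = L + M := by
    simp only [L, M, ← sum_add_distrib, ← mul_add]
    refine sum_congr rfl fun i _ => sum_congr rfl fun j _ => ?_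
    split_ifs <;> linarith
  have hM : M ≤ ε / 4 * ∑ i, ‖x i‖ ^ 2 := by
    rw [mul_sum]
    refine sum_le_sum fun i _ => (le_abs_self _).trans (abs_le_of_sq_le_sq ?_ (by positivity))
    calc _ ≤ k * (τ * ‖x i‖ ^ 2) * ∑ j, y i j ^ 2 := sq_sum_mul_ite_sq_lt_le (hy i) (by positivity)
      _ ≤ k * (τ * ‖x i‖ ^ 2) * (Λ * ‖x i‖ ^ 2) := by gcongr; exact hyx i
      _ = k * τ * Λ * (‖x i‖ ^ 2) ^ 2 := by ring
      _ ≤ ε ^ 2 / 16 * (‖x i‖ ^ 2) ^ 2 := by gcongr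
      _ = (ε / 4 * ‖x i‖ ^ 2) ^ 2 := by ring
  have hL : D / 4 ≤ L := by
    have := sum_sq_norm_sub_le_two_mul_sum_inner hz y a
    linarith
  have hLsq : L ^ 2 ≤ Λ * (∑ i, ‖x i‖ ^ 2) * ∑ j, tcObjective τ x z (a j) :=
    calc L ^ 2 ≤ (∑ i, ∑ j, y i j ^ 2) *
          ∑ i, ∑ j, (if τ * ‖x i‖ ^ 2 ≤ c i j ^ 2 then c i j else 0) ^ 2 := sq_sum_sum_mul_le _ _
      _ = (∑ i, ∑ j, y i j ^ 2) * ∑ j, tcObjective τ x z (a j) := by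
          congr 1
          rw [sum_comm]
          simp only [tcObjective, c, ite_pow, zero_pow two_ne_zero]
      _ ≤ Λ * (∑ i, ‖x i‖ ^ 2) * ∑ j, tcObjective τ x z (a j) :=
          mul_le_mul_of_nonneg_right ((sum_le_sum fun i _ => hyx i).trans_eq (mul_sum ..).symm)
            (sum_nonneg fun j _ => tcObjective_nonneg τ x z (a j))
  have hD : 0 ≤ D := (by positivity : 0 ≤ ε * ∑ i, ‖x i‖ ^ 2).trans hgap
  calc D ^ 2 = 16 * (D / 4) ^ 2 := by ring
    _ ≤ 16 * L ^ 2 := by gcongr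
    _ ≤ _ := by linarith

theorem sq_div_mul_le_iSup_tcObjective {k : ℕ} {τ Λ ε : ℝ} {x z : ι → E} {a : κ → E}
    {y : ι → κ → ℝ} (hz : ∀ i, ⟪z i, x i - z i⟫ = 0) (hy : ∀ i, #{j | y i j ≠ 0} ≤ k)
    (hyx : ∀ i, ∑ j, y i j ^ 2 ≤ Λ * ‖x i‖ ^ 2) (hτ : 0 ≤ τ) (hε : 0 ≤ ε) (hΛ : 0 ≤ Λ)
    (hkτΛ : k * τ * Λ ≤ ε ^ 2 / 16) (ha : ∀ j, ‖a j‖ = 1)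
    (hgap : ε ≤ (∑ i, ‖z i‖ ^ 2 - ∑ i, ‖x i - ∑ j, y i j • a j‖ ^ 2) / ∑ i, ‖x i‖ ^ 2) :
    ((∑ i, ‖z i‖ ^ 2 - ∑ i, ‖x i - ∑ j, y i j • a j‖ ^ 2) / ∑ i, ‖x i‖ ^ 2) ^ 2 /
        (16 * Fintype.card κ * Λ) * ∑ i, ‖x i‖ ^ 2 ≤
      ⨆ u : {u : E // ‖u‖ = 1}, tcObjective τ x z u := by
  set D := ∑ i, ‖z i‖ ^ 2 - ∑ i, ‖x i - ∑ j, y i j • a j‖ ^ 2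
  set W := ∑ i, ‖x i‖ ^ 2
  have hS := Real.iSup_nonneg fun u : {u : E // ‖u‖ = 1} => tcObjective_nonneg τ x z u
  have hW0 : 0 ≤ W := sum_nonneg fun i _ => sq_nonneg _
  rcases hW0.eq_or_lt with hW | hW
  · rw [← hW, mul_zero]
    exact hS
  have hkey := sq_sum_sub_le_mul_sum_tcObjective (a := a) hz hy hyx hτ hε hkτΛ
    ((le_div_iff₀ hW).1 hgap)
  have hsum := sum_tcObjective_le_card_mul_iSup τ x z ha
  have hDW : (D / W) ^ 2 * W * W = D ^ 2 := by field_simp [hW.ne']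
  rw [div_mul_eq_mul_div]
  refine div_le_of_le_mul₀ (by positivity) hS (le_of_mul_le_mul_right ?_ hW)
  linear_combination hDW + hkey + 16 * Λ * W * hsum

end InnerProductSpace

theorem stmt_10_general (d n m k : ℕ)
    (Λ ε α β : ℝ) (hΛ : 0 < Λ) (hε : 0 < ε)
    (hβ : β ∈ Set.Ioc (0 : ℝ) 1)
    (x : Fin n → EuclideanSpace ℝ (Fin d))
    (a : Fin m → EuclideanSpace ℝ (Fin d)) (ha : ∀ j, ‖a j‖ = 1)
    (y : Fin n → Fin m → ℝ)
    (hysparse : ∀ i, {j | y i j ≠ 0}.ncard ≤ k)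
    (hynorm : ∀ i, ∑ j, (y i j) ^ 2 ≤ Λ * ‖x i‖ ^ 2)
    (T : Fin n → Submodule ℝ (EuclideanSpace ℝ (Fin d)))
    (z : Fin n → EuclideanSpace ℝ (Fin d))
    (hz : ∀ i, z i = x i - ((T i).orthogonalProjectionOnto (x i) : EuclideanSpace ℝ (Fin d)))
    (W : ℝ) (hW : W = ∑ i, ‖x i‖ ^ 2)
    (γs : ℝ) (hγs : γs = (1 / W) * ∑ i, ‖x i - ∑ j, y i j • a j‖ ^ 2)
    (ψ : ℝ) (hψ : ψ = (1 / W) * ∑ i, ‖z i‖ ^ 2)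
    (τ : ℝ) (hτ : τ = ε ^ 2 / (16 * k * Λ))
    (hlarge : ψ ≥ γs + ε)
    (v : EuclideanSpace ℝ (Fin d))
    (happrox : (∑ i, if α * τ * ‖x i‖ ^ 2 ≤ (inner ℝ (z i) v : ℝ) ^ 2
        then (inner ℝ (z i) v : ℝ) ^ 2 else 0)
      ≥ β * ⨆ u : {u : EuclideanSpace ℝ (Fin d) // ‖u‖ = 1},
          ∑ i, if τ * ‖x i‖ ^ 2 ≤ (inner ℝ (z i) (u : EuclideanSpace ℝ (Fin d)) : ℝ) ^ 2
            then (inner ℝ (z i) (u : EuclideanSpace ℝ (Fin d)) : ℝ) ^ 2 else 0) :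
    (∑ i, if α * τ * ‖x i‖ ^ 2 ≤ (inner ℝ (z i) v : ℝ) ^ 2
        then (inner ℝ (z i) v : ℝ) ^ 2 else 0)
      ≥ (β * (ψ - γs) ^ 2 / (16 * m * Λ)) * W := by
  obtain ⟨hβ, -⟩ := hβ
  have hψγ : ψ - γs = (∑ i, ‖z i‖ ^ 2 - ∑ i, ‖x i - ∑ j, y i j • a j‖ ^ 2) / W := by
    rw [hψ, hγs]
    ring
  have hperp : ∀ i, ⟪z i, x i - z i⟫ = 0 := fun i => by
    rw [hz i, sub_sub_cancel]
    exact Submodule.starProjection_inner_eq_zero _ _ (Submodule.coe_mem _)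
  have hsparse : ∀ i, #{j | y i j ≠ 0} ≤ k := fun i => by
    simpa [Set.ncard_eq_toFinset_card'] using hysparse i
  have hkτΛ : k * τ * Λ ≤ ε ^ 2 / 16 := by
    rcases k.eq_zero_or_pos with rfl | hk
    · simp only [Nat.cast_zero, zero_mul]
      positivity
    · rw [hτ]
      field_simp
      rfl
  subst hW
  have hbound := sq_div_mul_le_iSup_tcObjective hperp hsparse hynorm (by rw [hτ]; positivity)
    hε.le hΛ.le hkτΛ ha (hψγ ▸ by linarith)
  rw [Fintype.card_fin, ← hψγ] at hbound
  refine le_trans ?_ happrox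
  calc β * (ψ - γs) ^ 2 / (16 * m * Λ) * ∑ i, ‖x i‖ ^ 2
      = β * ((ψ - γs) ^ 2 / (16 * m * Λ) * ∑ i, ‖x i‖ ^ 2) := by ring
    _ ≤ _ := mul_le_mul_of_nonneg_left hbound hβ.le

/-- Guarantee for the vector returned by an (α,β)-approximation to the residual
τ-TC instance: its thresholded correlation mass is at least β(ψ − γ*)²W/(16mΛ). -/
theorem stmt_10 (d n m k : ℕ) (hd : 0 < d) (hn : 0 < n) (hm : 0 < m) (hk : 0 < k)
    (Λ ε α β : ℝ) (hΛ : 0 < Λ) (hε : 0 < ε)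
    (hα : α ∈ Set.Ioc (0 : ℝ) 1) (hβ : β ∈ Set.Ioc (0 : ℝ) 1)
    (x : Fin n → EuclideanSpace ℝ (Fin d)) (hx : ∀ i, x i ≠ 0)
    (a : Fin m → EuclideanSpace ℝ (Fin d)) (ha : ∀ j, ‖a j‖ = 1)
    (y : Fin n → Fin m → ℝ)
    (hysparse : ∀ i, {j | y i j ≠ 0}.ncard ≤ k)
    (hynorm : ∀ i, ∑ j, (y i j) ^ 2 ≤ Λ * ‖x i‖ ^ 2)
    (T : Fin n → Submodule ℝ (EuclideanSpace ℝ (Fin d)))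
    (z : Fin n → EuclideanSpace ℝ (Fin d))
    (hz : ∀ i, z i = x i - ((T i).orthogonalProjectionOnto (x i) : EuclideanSpace ℝ (Fin d)))
    (W : ℝ) (hW : W = ∑ i, ‖x i‖ ^ 2)
    (γs : ℝ) (hγs : γs = (1 / W) * ∑ i, ‖x i - ∑ j, y i j • a j‖ ^ 2)
    (ψ : ℝ) (hψ : ψ = (1 / W) * ∑ i, ‖z i‖ ^ 2)
    (τ : ℝ) (hτ : τ = ε ^ 2 / (16 * k * Λ))
    (hlarge : ψ ≥ γs + ε)
    (v : EuclideanSpace ℝ (Fin d)) (hv : ‖v‖ = 1)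
    (happrox : (∑ i, if α * τ * ‖x i‖ ^ 2 ≤ (inner ℝ (z i) v : ℝ) ^ 2
        then (inner ℝ (z i) v : ℝ) ^ 2 else 0)
      ≥ β * ⨆ u : {u : EuclideanSpace ℝ (Fin d) // ‖u‖ = 1},
          ∑ i, if τ * ‖x i‖ ^ 2 ≤ (inner ℝ (z i) (u : EuclideanSpace ℝ (Fin d)) : ℝ) ^ 2
            then (inner ℝ (z i) (u : EuclideanSpace ℝ (Fin d)) : ℝ) ^ 2 else 0) :
    (∑ i, if α * τ * ‖x i‖ ^ 2 ≤ (inner ℝ (z i) v : ℝ) ^ 2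
        then (inner ℝ (z i) v : ℝ) ^ 2 else 0)
      ≥ (β * (ψ - γs) ^ 2 / (16 * m * Λ)) * W :=
  stmt_10_general d n m k Λ ε α β hΛ hε hβ x a ha y hysparse hynorm T z hz W hW γs hγs ψ hψ τ hτ
    hlarge v happrox
end

section
/- Let τ ∈ (0,1), let v_1,…,v_q (q ≥ 1) be vectors in the unit ball of ℝ^d, and suppose there exists a unit vector x ∈ ℝ^d such that ⟨x, v_i⟩² ≥ τ for all i ∈ {1,…,q}. Let w_1,…,w_q ≥ 0 be weights. Then there exists an index ℓ ∈ {1,…,q} such that Σ_{i : ⟨v_ℓ, v_i⟩² ≥ τ²/4} w_i ⟨v_ℓ, v_i⟩² ≥ (τ²/32) Σ_{i=1}^q w_i ⟨x, v_i⟩². -/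
/-!
With `y = ∑ wᵢ ⟪x, vᵢ⟫ vᵢ` we have `⟪x, y⟫ = S := ∑ wᵢ ⟪x, vᵢ⟫²`, so `S ≤ ‖y‖`, while Cauchy–Schwarz
over pairs bounds `‖y‖⁴ ≤ S² T` with `T = ∑ w_ℓ wᵢ ⟪v_ℓ, vᵢ⟫²` (the operator norm of the frame
operator `∑ wᵢ vᵢ vᵢᵀ` is at most its Frobenius norm). Hence `τ S ∑ wᵢ ≤ S² ≤ T`, and averaging over
`ℓ` gives an `ℓ` with `∑ wᵢ ⟪v_ℓ, vᵢ⟫² ≥ τ S`. The terms below the threshold `τ²/4` contribute at most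
`τ²/4 ∑ wᵢ ≤ τ S / 4`, so the truncated sum is still at least `3τS/4 ≥ τ² S / 32`.
-/

open Finset RealInnerProductSpace

section

variable {ι E : Type*} [Fintype ι] [NormedAddCommGroup E] [InnerProductSpace ℝ E]

lemma norm_sum_smul_sq (c : ι → ℝ) (v : ι → E) :
    ‖∑ i, c i • v i‖ ^ 2 = ∑ j, ∑ i, c j * c i * ⟪v j, v i⟫ := by
  rw [← real_inner_self_eq_norm_sq, sum_inner]
  refine sum_congr rfl fun j _ ↦ ?_
  simp only [real_inner_smul_left, inner_sum, real_inner_smul_right, mul_assoc]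
  exact sum_congr rfl fun i _ ↦ mul_left_comm _ _ _

lemma sq_sum_mul_inner_sq_le {x : E} (hx : ‖x‖ ≤ 1) (v : ι → E) {w : ι → ℝ}
    (hw : ∀ i, 0 ≤ w i) :
    (∑ i, w i * ⟪x, v i⟫ ^ 2) ^ 2 ≤ ∑ j, ∑ i, w j * w i * ⟪v j, v i⟫ ^ 2 := by
  set S := ∑ i, w i * ⟪x, v i⟫ ^ 2
  set T := ∑ j, ∑ i, w j * w i * ⟪v j, v i⟫ ^ 2
  set y := ∑ i, (w i * ⟪x, v i⟫) • v i
  have hS : 0 ≤ S := sum_nonneg fun i _ ↦ mul_nonneg (hw i) (sq_nonneg _)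
  have hT : 0 ≤ T := sum_nonneg fun j _ ↦ sum_nonneg fun i _ ↦
    mul_nonneg (mul_nonneg (hw j) (hw i)) (sq_nonneg _)
  have hxy : ⟪x, y⟫ = S := by
    simp only [y, S, inner_sum, real_inner_smul_right]
    exact sum_congr rfl fun i _ ↦ by ring
  have hSy : S ≤ ‖y‖ := by
    calc S = ⟪x, y⟫ := hxy.symm
      _ ≤ ‖x‖ * ‖y‖ := real_inner_le_norm x y
      _ ≤ ‖y‖ := mul_le_of_le_one_left (norm_nonneg y) hx
  have hCS : (‖y‖ ^ 2) ^ 2 ≤ S ^ 2 * T := by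
    have hpairs := sum_sq_le_sum_mul_sum_of_sq_le_mul (univ : Finset (ι × ι))
      (r := fun p ↦ w p.1 * ⟪x, v p.1⟫ * (w p.2 * ⟪x, v p.2⟫) * ⟪v p.1, v p.2⟫)
      (f := fun p ↦ w p.1 * ⟪x, v p.1⟫ ^ 2 * (w p.2 * ⟪x, v p.2⟫ ^ 2))
      (g := fun p ↦ w p.1 * w p.2 * ⟪v p.1, v p.2⟫ ^ 2)
      (fun p _ ↦ mul_nonneg (mul_nonneg (hw _) (sq_nonneg _)) (mul_nonneg (hw _) (sq_nonneg _)))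
      (fun p _ ↦ mul_nonneg (mul_nonneg (hw _) (hw _)) (sq_nonneg _))
      (fun p _ ↦ le_of_eq (by ring))
    simp only [Fintype.sum_prod_type] at hpairs
    calc (‖y‖ ^ 2) ^ 2
        = (∑ j, ∑ i, w j * ⟪x, v j⟫ * (w i * ⟪x, v i⟫) * ⟪v j, v i⟫) ^ 2 := by
          rw [norm_sum_smul_sq]
      _ ≤ (∑ j, ∑ i, w j * ⟪x, v j⟫ ^ 2 * (w i * ⟪x, v i⟫ ^ 2)) * T := hpairs
      _ = S ^ 2 * T := by rw [← Fintype.sum_mul_sum, ← sq]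
  rcases hS.eq_or_lt with hS0 | hSpos
  · rw [← hS0]; simpa using hT
  · nlinarith [pow_le_pow_left₀ hS hSy 2, pow_pos hSpos 2]

lemma exists_le_of_mul_sum_le_sum_mul {w g : ι → ℝ} (hw : ∀ i, 0 ≤ w i)
    (hpos : 0 < ∑ i, w i) {c : ℝ} (h : c * ∑ i, w i ≤ ∑ i, w i * g i) : ∃ i, c ≤ g i := by
  obtain ⟨m, -, hm⟩ := univ.exists_max_image g (univ.nonempty_of_sum_ne_zero hpos.ne')
  refine ⟨m, le_of_mul_le_mul_right ?_ hpos⟩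
  calc c * ∑ i, w i ≤ ∑ i, w i * g i := h
    _ ≤ ∑ i, w i * g m := sum_le_sum fun i hi ↦ mul_le_mul_of_nonneg_left (hm i hi) (hw i)
    _ = g m * ∑ i, w i := by rw [← sum_mul, mul_comm]

lemma sum_mul_le_sum_ite_add {w : ι → ℝ} (hw : ∀ i, 0 ≤ w i) (f : ι → ℝ) {t : ℝ}
    (ht : 0 ≤ t) :
    ∑ i, w i * f i ≤ (∑ i, if t ≤ f i then w i * f i else 0) + t * ∑ i, w i := by
  rw [mul_sum, ← sum_add_distrib]
  refine sum_le_sum fun i _ ↦ ?_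
  split_ifs with h
  · nlinarith [mul_nonneg ht (hw i)]
  · nlinarith [mul_le_mul_of_nonneg_left (not_le.1 h).le (hw i)]

lemma mul_sum_le_sum_mul_of_forall_le {w f : ι → ℝ} (hw : ∀ i, 0 ≤ w i) {c : ℝ}
    (h : ∀ i, c ≤ f i) : c * ∑ i, w i ≤ ∑ i, w i * f i := by
  rw [mul_sum]
  exact sum_le_sum fun i _ ↦ by rw [mul_comm]; exact mul_le_mul_of_nonneg_left (h i) (hw i)

lemma exists_mul_sum_mul_inner_sq_le [Nonempty ι] {x : E} (hx : ‖x‖ ≤ 1) (v : ι → E)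
    {w : ι → ℝ} (hw : ∀ i, 0 ≤ w i) {τ : ℝ} (hcorr : ∀ i, τ ≤ ⟪x, v i⟫ ^ 2) :
    ∃ ℓ, τ * ∑ i, w i * ⟪x, v i⟫ ^ 2 ≤ ∑ i, w i * ⟪v ℓ, v i⟫ ^ 2 := by
  set S := ∑ i, w i * ⟪x, v i⟫ ^ 2
  have hS : 0 ≤ S := sum_nonneg fun i _ ↦ mul_nonneg (hw i) (sq_nonneg _)
  rcases hS.eq_or_lt with hS0 | hSpos
  · refine ⟨Classical.arbitrary ι, ?_⟩
    rw [← hS0, mul_zero]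
    exact sum_nonneg fun i _ ↦ mul_nonneg (hw i) (sq_nonneg _)
  have hW : 0 < ∑ i, w i := by
    obtain ⟨i, -, hi⟩ :=
      (sum_pos_iff_of_nonneg fun i _ ↦ mul_nonneg (hw i) (sq_nonneg _)).1 hSpos
    exact (sum_pos_iff_of_nonneg fun i _ ↦ hw i).2
      ⟨i, mem_univ i, pos_of_mul_pos_left hi (sq_nonneg _)⟩
  refine exists_le_of_mul_sum_le_sum_mul hw hW ?_
  calc τ * S * ∑ i, w i = S * (τ * ∑ i, w i) := by ring
    _ ≤ S * S := mul_le_mul_of_nonneg_left (mul_sum_le_sum_mul_of_forall_le hw hcorr) hS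
    _ = S ^ 2 := (sq S).symm
    _ ≤ ∑ j, ∑ i, w j * w i * ⟪v j, v i⟫ ^ 2 := sq_sum_mul_inner_sq_le hx v hw
    _ = ∑ j, w j * ∑ i, w i * ⟪v j, v i⟫ ^ 2 := by simp only [mul_sum, mul_assoc]

end

theorem stmt_11_general (d q : ℕ) (hq : 1 ≤ q) (τ : ℝ) (hτ : τ ∈ Set.Ioo (0 : ℝ) 1)
    (v : Fin q → EuclideanSpace ℝ (Fin d))
    (x : EuclideanSpace ℝ (Fin d)) (hx : ‖x‖ = 1)
    (hcorr : ∀ i, τ ≤ (inner ℝ x (v i) : ℝ) ^ 2)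
    (w : Fin q → ℝ) (hw : ∀ i, 0 ≤ w i) :
    ∃ ℓ : Fin q,
      (∑ i, if τ ^ 2 / 4 ≤ (inner ℝ (v ℓ) (v i) : ℝ) ^ 2
          then w i * (inner ℝ (v ℓ) (v i) : ℝ) ^ 2 else 0)
        ≥ (τ ^ 2 / 32) * ∑ i, w i * (inner ℝ x (v i) : ℝ) ^ 2 := by
  obtain ⟨hτ0, hτ1⟩ := hτ
  have : Nonempty (Fin q) := ⟨⟨0, hq⟩⟩
  obtain ⟨ℓ, hℓ⟩ := exists_mul_sum_mul_inner_sq_le hx.le v hw hcorr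
  refine ⟨ℓ, ?_⟩
  have hτW := mul_sum_le_sum_mul_of_forall_le hw hcorr
  have htrunc := sum_mul_le_sum_ite_add hw (fun i ↦ ⟪v ℓ, v i⟫ ^ 2) (by positivity : 0 ≤ τ ^ 2 / 4)
  have hS : 0 ≤ ∑ i, w i * ⟪x, v i⟫ ^ 2 := sum_nonneg fun i _ ↦ mul_nonneg (hw i) (sq_nonneg _)
  nlinarith [mul_le_mul_of_nonneg_left hτW hτ0.le, mul_nonneg hτ0.le hS]

/-- Clustering lemma: if all the `vᵢ` (in the unit ball) have squared correlation
at least τ with some unit vector `x`, then one of the `vᵢ` themselves achieves,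
with threshold τ²/4, at least τ²/32 of the weighted correlation mass of `x`. -/
theorem stmt_11 (d q : ℕ) (hq : 1 ≤ q) (τ : ℝ) (hτ : τ ∈ Set.Ioo (0 : ℝ) 1)
    (v : Fin q → EuclideanSpace ℝ (Fin d)) (hv : ∀ i, ‖v i‖ ≤ 1)
    (x : EuclideanSpace ℝ (Fin d)) (hx : ‖x‖ = 1)
    (hcorr : ∀ i, τ ≤ (inner ℝ x (v i) : ℝ) ^ 2)
    (w : Fin q → ℝ) (hw : ∀ i, 0 ≤ w i) :
    ∃ ℓ : Fin q,
      (∑ i, if τ ^ 2 / 4 ≤ (inner ℝ (v ℓ) (v i) : ℝ) ^ 2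
          then w i * (inner ℝ (v ℓ) (v i) : ℝ) ^ 2 else 0)
        ≥ (τ ^ 2 / 32) * ∑ i, w i * (inner ℝ x (v i) : ℝ) ^ 2 :=
  stmt_11_general d q hq τ hτ v x hx hcorr w hw
end

section
/- Let p ≥ 2, let n, d ≥ 1, let v_1,…,v_n ∈ ℝ^d satisfy ‖v_i‖ ≤ 1, and let α, β ∈ (0,1]. Define Q = sup over unit vectors y ∈ ℝ^d of (Σ_{i=1}^n |⟨v_i, y⟩|^p)^{1/p}, and assume Q > 0. For τ > 0 define OPT_TC(τ) = sup over unit vectors y of Σ_{i : ⟨v_i,y⟩² ≥ τ} ⟨v_i,y⟩². Then there exists τ ∈ (0,1] such that every unit vector x ∈ ℝ^d satisfying Σ_{i : ⟨v_i,x⟩² ≥ ατ} ⟨v_i,x⟩² ≥ β · OPT_TC(τ) also satisfies Σ_{i=1}^n |⟨v_i,x⟩|^p ≥ α^{(p−2)/2} β Q^p / (2^{p/2+1} (log₂ n + 1)). -/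
/-!
Let `y₀` maximise `∑ |⟪vᵢ, y⟫| ^ p` over the unit sphere and put `aᵢ = ⟪vᵢ, y₀⟫²`, so that
`Q ^ p = ∑ aᵢ ^ (p / 2)`. Sorting the `aᵢ` into `O(log n)` dyadic levels below `Q²` (the tiny
ones carry at most half the mass) gives a level `τ` with
`τ ^ (p / 2 - 1) · ∑_{aᵢ ≥ τ} aᵢ ≳ Q ^ p / log n`, so `OPT_TC(τ)` is large. Every `⟪vᵢ, x⟫²`
counted in the `ατ`-thresholded objective of `x` is at least `ατ`, hence
`|⟪vᵢ, x⟫| ^ p ≥ (ατ) ^ (p / 2 - 1) ⟪vᵢ, x⟫²`, and summing transfers the bound to `x`.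
-/

open Finset Real

lemma sq_rpow_half (t p : ℝ) : (t ^ 2) ^ (p / 2) = |t| ^ p := by
  rw [← sq_abs, ← rpow_natCast |t| 2, ← rpow_mul (abs_nonneg t)]
  congr 1
  ring

lemma exists_norm_eq_one_iSup_eq {E : Type*} [NormedAddCommGroup E] [NormedSpace ℝ E]
    [FiniteDimensional ℝ E] [Nontrivial E] {f : E → ℝ} (hf : Continuous f) :
    ∃ y₀ : E, ‖y₀‖ = 1 ∧ ⨆ y : {y : E // ‖y‖ = 1}, f y = f y₀ := by
  have hsphere : {y : E | ‖y‖ = 1} = Metric.sphere 0 1 := by ext; simp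
  obtain ⟨y₀, hy₀, hmax⟩ := (hsphere ▸ isCompact_sphere (0 : E) 1).exists_isMaxOn
    (hsphere ▸ NormedSpace.sphere_nonempty.mpr zero_le_one) hf.continuousOn
  exact ⟨y₀, hy₀, hmax.iSup_eq hy₀⟩

lemma logb_two_natCast_nonneg (n : ℕ) : 0 ≤ logb 2 n :=
  div_nonneg (log_natCast_nonneg n) (log_nonneg one_le_two)

lemma natLog_add_two_le_logb (n : ℕ) : (Nat.log 2 n : ℝ) + 2 ≤ 2 * (logb 2 n + 1) := by
  have hlog : (Nat.log 2 n : ℝ) ≤ logb 2 n := by exact_mod_cast natLog_le_logb n 2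
  linarith [logb_two_natCast_nonneg n]

lemma two_mul_le_two_pow_log_add_two (n : ℕ) : 2 * n ≤ 2 ^ (Nat.log 2 n + 2) := by
  have := Nat.lt_pow_succ_log_self one_lt_two n
  rw [pow_succ _ (Nat.log 2 n + 1)]
  omega

lemma rpow_add_one_le_of_le_two_mul {e τ b : ℝ} (he : 0 ≤ e) (hb : 0 ≤ b) (h : b ≤ 2 * τ) :
    b ^ (e + 1) ≤ (2 * τ) ^ e * b := by
  rw [rpow_add_one' hb (by linarith)]
  exact mul_le_mul_of_nonneg_right (rpow_le_rpow hb h he) hb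

lemma exists_dyadic_bucket {M b : ℝ} (hb : b ≤ M) (K : ℕ) (hK : M / 2 ^ (K + 1) ≤ b) :
    ∃ k ∈ range (K + 1), M / 2 ^ (k + 1) ≤ b ∧ b ≤ 2 * (M / 2 ^ (k + 1)) := by
  induction K with
  | zero => exact ⟨0, by simp, by simpa using hK, by linarith⟩
  | succ K ih =>
    by_cases hbK : M / 2 ^ (K + 1) ≤ b
    · obtain ⟨k, hk, hbk⟩ := ih hbK
      exact ⟨k, mem_range.mpr (by grind), hbk⟩
    · have hhalf : 2 * (M / 2 ^ (K + 1 + 1)) = M / 2 ^ (K + 1) := by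
        rw [pow_succ _ (K + 1)]
        field_simp
      exact ⟨K + 1, self_mem_range_succ _, hK, by linarith⟩

section thresholdSum

variable {ι : Type*} [Fintype ι]

/-- With `aᵢ = ⟪vᵢ, y⟫²` this is the τ-TC objective of `y`. -/
noncomputable def thresholdSum (a : ι → ℝ) (τ : ℝ) : ℝ :=
  ∑ i, if τ ≤ a i then a i else 0

lemma thresholdSum_le_sum {a : ι → ℝ} (ha : ∀ i, 0 ≤ a i) (τ : ℝ) :
    thresholdSum a τ ≤ ∑ i, a i :=
  sum_le_sum fun i _ => by split_ifs <;> simp [ha i]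

lemma exists_le_of_thresholdSum_pos {a : ι → ℝ} {τ : ℝ} (h : 0 < thresholdSum a τ) :
    ∃ i, τ ≤ a i := by
  by_contra! hlt
  simp [thresholdSum, fun i => not_le.mpr (hlt i)] at h

lemma rpow_mul_thresholdSum_le {a : ι → ℝ} {e s : ℝ} (ha : ∀ i, 0 ≤ a i) (he : 0 ≤ e)
    (hs : 0 ≤ s) : s ^ e * thresholdSum a s ≤ ∑ i, a i ^ (e + 1) := by
  rw [thresholdSum, mul_sum]
  refine sum_le_sum fun i _ => ?_
  split_ifs with h
  · rw [rpow_add_one' (ha i) (by linarith)]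
    exact mul_le_mul_of_nonneg_right (rpow_le_rpow hs h he) (ha i)
  · rw [mul_zero]
    exact rpow_nonneg (ha i) _

lemma rpow_add_one_le_dyadic {e M b : ℝ} (he : 0 ≤ e) (hb : 0 ≤ b) (hbM : b ≤ M) (K : ℕ) :
    b ^ (e + 1) ≤ (M / 2 ^ (K + 1)) ^ (e + 1) +
      ∑ k ∈ range (K + 1),
        (2 * (M / 2 ^ (k + 1))) ^ e * (if M / 2 ^ (k + 1) ≤ b then b else 0) := by
  have hM : 0 ≤ M := hb.trans hbM
  have hterm : ∀ k : ℕ,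
      0 ≤ (2 * (M / 2 ^ (k + 1))) ^ e * (if M / 2 ^ (k + 1) ≤ b then b else 0) :=
    fun k => mul_nonneg (by positivity) (by split_ifs <;> simp [hb])
  by_cases hK : M / 2 ^ (K + 1) ≤ b
  · obtain ⟨k, hk, hlo, hhi⟩ := exists_dyadic_bucket hbM K hK
    calc b ^ (e + 1)
        ≤ (2 * (M / 2 ^ (k + 1))) ^ e * (if M / 2 ^ (k + 1) ≤ b then b else 0) := by
          rw [if_pos hlo]
          exact rpow_add_one_le_of_le_two_mul he hb hhi
      _ ≤ ∑ k ∈ range (K + 1),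
            (2 * (M / 2 ^ (k + 1))) ^ e * (if M / 2 ^ (k + 1) ≤ b then b else 0) :=
          single_le_sum (fun k _ => hterm k) hk
      _ ≤ _ := le_add_of_nonneg_left (by positivity)
  · calc b ^ (e + 1) ≤ (M / 2 ^ (K + 1)) ^ (e + 1) :=
          rpow_le_rpow hb (not_le.mp hK).le (by linarith)
      _ ≤ _ := le_add_of_nonneg_right (sum_nonneg fun k _ => hterm k)

lemma sum_rpow_le_dyadic {a : ι → ℝ} {e M : ℝ} (ha : ∀ i, 0 ≤ a i) (haM : ∀ i, a i ≤ M)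
    (he : 0 ≤ e) (K : ℕ) :
    ∑ i, a i ^ (e + 1) ≤ Fintype.card ι * (M / 2 ^ (K + 1)) ^ (e + 1) +
      ∑ k ∈ range (K + 1), (2 * (M / 2 ^ (k + 1))) ^ e * thresholdSum a (M / 2 ^ (k + 1)) := by
  calc ∑ i, a i ^ (e + 1)
      ≤ ∑ i, ((M / 2 ^ (K + 1)) ^ (e + 1) + ∑ k ∈ range (K + 1),
          (2 * (M / 2 ^ (k + 1))) ^ e * (if M / 2 ^ (k + 1) ≤ a i then a i else 0)) :=
        sum_le_sum fun i _ => rpow_add_one_le_dyadic he (ha i) (haM i) K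
    _ = _ := by
        simp only [sum_add_distrib, sum_const, card_univ, nsmul_eq_mul, thresholdSum, mul_sum]
        rw [sum_comm]

/-- With `M ^ (e + 1) = ∑ aᵢ ^ (e + 1)`, the terms below `M / 2 ^ (K + 1)` carry at most half
of the sum, and one of the `K + 1` dyadic levels `M / 2 ^ (k + 1)` carries a `1 / (K + 1)` share
of the other half. -/
lemma exists_threshold_of_two_mul_card_le {a : ι → ℝ} {e : ℝ} (ha : ∀ i, 0 ≤ a i) (he : 0 ≤ e)
    (hS : 0 < ∑ i, a i ^ (e + 1)) (K : ℕ) (hK : 2 * Fintype.card ι ≤ 2 ^ (K + 1)) :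
    ∃ τ > 0, ∑ i, a i ^ (e + 1) ≤ 2 * (K + 1) * ((2 * τ) ^ e * thresholdSum a τ) := by
  set S := ∑ i, a i ^ (e + 1)
  set M := S ^ (e + 1)⁻¹
  have hM : 0 < M := rpow_pos_of_pos hS _
  have haM : ∀ i, a i ≤ M := fun i =>
    (le_rpow_inv_iff_of_pos (ha i) hS.le (by linarith)).mpr
      (single_le_sum (fun j _ => rpow_nonneg (ha j) _) (mem_univ i))
  have hsmall : Fintype.card ι * (M / 2 ^ (K + 1)) ^ (e + 1) ≤ S / 2 := by
    have hpow : (2 : ℝ) ^ (K + 1) ≤ ((2 : ℝ) ^ (K + 1)) ^ (e + 1) :=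
      self_le_rpow_of_one_le (one_le_pow₀ one_le_two) (by linarith)
    have hK' : 2 * (Fintype.card ι : ℝ) ≤ 2 ^ (K + 1) := by exact_mod_cast hK
    rw [div_rpow hM.le (by positivity), rpow_inv_rpow hS.le (by linarith), mul_div_assoc',
      div_le_div_iff₀ (by positivity) two_pos]
    nlinarith
  have hsum : ∑ _k ∈ range (K + 1), S / (2 * (K + 1)) ≤
      ∑ k ∈ range (K + 1), (2 * (M / 2 ^ (k + 1))) ^ e * thresholdSum a (M / 2 ^ (k + 1)) := by
    have hhalf : ((K + 1 : ℕ) : ℝ) * (S / (2 * (K + 1))) = S / 2 := by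
      push_cast
      field_simp
    rw [sum_const, card_range, nsmul_eq_mul, hhalf]
    linarith [sum_rpow_le_dyadic ha haM he K]
  obtain ⟨k, -, hk⟩ := exists_le_of_sum_le nonempty_range_add_one hsum
  refine ⟨M / 2 ^ (k + 1), by positivity, ?_⟩
  rwa [div_le_iff₀' (by positivity)] at hk

theorem exists_threshold_sum_rpow_le {a : ι → ℝ} {e : ℝ} (ha : ∀ i, 0 ≤ a i) (he : 0 ≤ e)
    (hS : 0 < ∑ i, a i ^ (e + 1)) :
    ∃ τ > 0, (∃ i, τ ≤ a i) ∧ ∑ i, a i ^ (e + 1) ≤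
      2 ^ (e + 2) * (logb 2 (Fintype.card ι) + 1) * (τ ^ e * thresholdSum a τ) := by
  obtain ⟨τ, hτ, hS_le⟩ := exists_threshold_of_two_mul_card_le ha he hS
    (Nat.log 2 (Fintype.card ι) + 1) (two_mul_le_two_pow_log_add_two _)
  have hK : ((Nat.log 2 (Fintype.card ι) + 1 : ℕ) : ℝ) + 1 ≤
      2 * (logb 2 (Fintype.card ι) + 1) := by
    push_cast
    linarith [natLog_add_two_le_logb (Fintype.card ι)]
  have hT : 0 < thresholdSum a τ :=
    pos_of_mul_pos_right (pos_of_mul_pos_right (hS.trans_le hS_le) (by positivity))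
      (rpow_nonneg (by positivity) e)
  refine ⟨τ, hτ, exists_le_of_thresholdSum_pos hT, hS_le.trans ?_⟩
  rw [mul_rpow zero_le_two hτ.le, rpow_add two_pos, rpow_two, mul_assoc (2 ^ e)]
  calc 2 * (((Nat.log 2 (Fintype.card ι) + 1 : ℕ) : ℝ) + 1) * (2 ^ e * (τ ^ e * thresholdSum a τ))
      ≤ 2 * (2 * (logb 2 (Fintype.card ι) + 1)) * (2 ^ e * (τ ^ e * thresholdSum a τ)) := by
        gcongr
    _ = _ := by ring

end thresholdSum

section InnerProductSpace

variable {E ι : Type*} [NormedAddCommGroup E] [InnerProductSpace ℝ E] [Fintype ι]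

lemma real_inner_sq_le_one {v y : E} (hv : ‖v‖ ≤ 1) (hy : ‖y‖ = 1) : inner ℝ v y ^ 2 ≤ 1 := by
  rw [sq_le_one_iff_abs_le_one]
  calc |inner ℝ v y| ≤ ‖v‖ * ‖y‖ := abs_real_inner_le_norm v y
    _ ≤ 1 := by rw [hy, mul_one]; exact hv

lemma thresholdSum_sq_inner_le_iSup {v : ι → E} (hv : ∀ i, ‖v i‖ ≤ 1) {y₀ : E} (hy₀ : ‖y₀‖ = 1)
    (τ : ℝ) :
    thresholdSum (fun i => inner ℝ (v i) y₀ ^ 2) τ ≤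
      ⨆ y : {y : E // ‖y‖ = 1}, thresholdSum (fun i => inner ℝ (v i) (y : E) ^ 2) τ := by
  refine le_ciSup (f := fun y : {y : E // ‖y‖ = 1} =>
    thresholdSum (fun i => inner ℝ (v i) (y : E) ^ 2) τ) ⟨Fintype.card ι, ?_⟩ ⟨y₀, hy₀⟩
  rintro _ ⟨y, rfl⟩
  calc _ ≤ ∑ i, inner ℝ (v i) (y : E) ^ 2 := thresholdSum_le_sum (fun i => sq_nonneg _) τ
    _ ≤ ∑ _i : ι, (1 : ℝ) := sum_le_sum fun i _ => real_inner_sq_le_one (hv i) y.2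
    _ = Fintype.card ι := by simp

lemma rpow_mul_thresholdSum_sq_inner_le {p s : ℝ} (hp : 2 ≤ p) (hs : 0 ≤ s) (v : ι → E) (x : E) :
    s ^ ((p - 2) / 2) * thresholdSum (fun i => inner ℝ (v i) x ^ 2) s ≤
      ∑ i, |inner ℝ (v i) x| ^ p := by
  calc _ ≤ ∑ i, (inner ℝ (v i) x ^ 2) ^ ((p - 2) / 2 + 1) :=
        rpow_mul_thresholdSum_le (fun i => sq_nonneg _) (by linarith) hs
    _ = _ := by simp only [show (p - 2) / 2 + 1 = p / 2 by ring, sq_rpow_half]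

theorem exists_threshold_sum_abs_inner_rpow_le {p : ℝ} (hp : 2 ≤ p) {v : ι → E}
    (hv : ∀ i, ‖v i‖ ≤ 1) {y₀ : E} (hy₀ : ‖y₀‖ = 1) (hS : 0 < ∑ i, |inner ℝ (v i) y₀| ^ p) :
    ∃ τ ∈ Set.Ioc (0 : ℝ) 1, ∑ i, |inner ℝ (v i) y₀| ^ p ≤
      2 ^ (p / 2 + 1) * (logb 2 (Fintype.card ι) + 1) *
        (τ ^ ((p - 2) / 2) * thresholdSum (fun i => inner ℝ (v i) y₀ ^ 2) τ) := by
  simp only [← sq_rpow_half, show p / 2 = (p - 2) / 2 + 1 by ring] at hS ⊢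
  obtain ⟨τ, hτ, ⟨i, hi⟩, hS_le⟩ :=
    exists_threshold_sum_rpow_le (fun i => sq_nonneg _) (by linarith) hS
  refine ⟨τ, ⟨hτ, hi.trans (real_inner_sq_le_one (hv i) hy₀)⟩, ?_⟩
  rwa [show (p - 2) / 2 + 2 = (p - 2) / 2 + 1 + 1 by ring] at hS_le

end InnerProductSpace

theorem stmt_13_general (p : ℝ) (hp : 2 ≤ p) (n d : ℕ) (hd : 1 ≤ d)
    (v : Fin n → EuclideanSpace ℝ (Fin d)) (hv : ∀ i, ‖v i‖ ≤ 1)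
    (α β : ℝ) (hα : α ∈ Set.Ioc (0 : ℝ) 1) (hβ : β ∈ Set.Ioc (0 : ℝ) 1)
    (Q : ℝ)
    (hQ : Q = ⨆ y : {y : EuclideanSpace ℝ (Fin d) // ‖y‖ = 1},
      (∑ i, |(inner ℝ (v i) (y : EuclideanSpace ℝ (Fin d)) : ℝ)| ^ p) ^ (1 / p))
    (hQpos : 0 < Q) :
    ∃ τ : ℝ, τ ∈ Set.Ioc (0 : ℝ) 1 ∧
      ∀ x : EuclideanSpace ℝ (Fin d), ‖x‖ = 1 →
        (∑ i, if α * τ ≤ (inner ℝ (v i) x : ℝ) ^ 2 then (inner ℝ (v i) x : ℝ) ^ 2 else 0)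
          ≥ β * (⨆ y : {y : EuclideanSpace ℝ (Fin d) // ‖y‖ = 1},
              ∑ i, if τ ≤ (inner ℝ (v i) (y : EuclideanSpace ℝ (Fin d)) : ℝ) ^ 2
                then (inner ℝ (v i) (y : EuclideanSpace ℝ (Fin d)) : ℝ) ^ 2 else 0) →
        ∑ i, |(inner ℝ (v i) x : ℝ)| ^ p
          ≥ α ^ ((p - 2) / 2) * β * Q ^ p / (2 ^ (p / 2 + 1) * (Real.logb 2 n + 1)) := by
  obtain ⟨hα0, -⟩ := hα
  obtain ⟨hβ0, -⟩ := hβ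
  have : NeZero d := ⟨by omega⟩
  obtain ⟨y₀, hy₀, hQy₀⟩ := exists_norm_eq_one_iSup_eq
    (f := fun y : EuclideanSpace ℝ (Fin d) => (∑ i, |inner ℝ (v i) y| ^ p) ^ (1 / p))
    (by fun_prop (disch := positivity))
  have hQp : Q ^ p = ∑ i, |inner ℝ (v i) y₀| ^ p := by
    rw [hQ, hQy₀, one_div, rpow_inv_rpow (by positivity) (by linarith)]
  obtain ⟨τ, hτ, hQτ⟩ :=
    exists_threshold_sum_abs_inner_rpow_le hp hv hy₀ (hQp ▸ rpow_pos_of_pos hQpos p)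
  rw [← hQp, Fintype.card_fin] at hQτ
  refine ⟨τ, hτ, fun x _ hx => ?_⟩
  change β * ⨆ y : {y : EuclideanSpace ℝ (Fin d) // ‖y‖ = 1},
      thresholdSum (fun i => inner ℝ (v i) (y : EuclideanSpace ℝ (Fin d)) ^ 2) τ ≤
    thresholdSum (fun i => inner ℝ (v i) x ^ 2) (α * τ) at hx
  set e := (p - 2) / 2
  set T := thresholdSum (fun i => inner ℝ (v i) y₀ ^ 2) τ
  have hlog := logb_two_natCast_nonneg n
  calc α ^ e * β * Q ^ p / (2 ^ (p / 2 + 1) * (logb 2 n + 1))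
      ≤ α ^ e * β * (τ ^ e * T) := by
        rw [div_le_iff₀ (by positivity)]
        calc α ^ e * β * Q ^ p ≤ α ^ e * β * (2 ^ (p / 2 + 1) * (logb 2 n + 1) * (τ ^ e * T)) := by
              gcongr
          _ = _ := by ring
    _ = (α * τ) ^ e * (β * T) := by rw [mul_rpow hα0.le hτ.1.le]; ring
    _ ≤ (α * τ) ^ e * thresholdSum (fun i => inner ℝ (v i) x ^ 2) (α * τ) :=
        mul_le_mul_of_nonneg_left ((mul_le_mul_of_nonneg_left
          (thresholdSum_sq_inner_le_iSup hv hy₀ τ) hβ0.le).trans hx)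
          (rpow_nonneg (mul_nonneg hα0.le hτ.1.le) e)
    _ ≤ ∑ i, |inner ℝ (v i) x| ^ p :=
        rpow_mul_thresholdSum_sq_inner_le hp (mul_nonneg hα0.le hτ.1.le) v x

/-- Reduction from 2→p norm approximation to the τ-TC problem: there is a threshold
`τ ∈ (0,1]` such that any (α,β)-approximate τ-TC solution `x` has ℓ_p correlation
mass at least `α^{(p−2)/2} β Q^p / (2^{p/2+1}(log₂ n + 1))`. -/
theorem stmt_13 (p : ℝ) (hp : 2 ≤ p) (n d : ℕ) (hn : 1 ≤ n) (hd : 1 ≤ d)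
    (v : Fin n → EuclideanSpace ℝ (Fin d)) (hv : ∀ i, ‖v i‖ ≤ 1)
    (α β : ℝ) (hα : α ∈ Set.Ioc (0 : ℝ) 1) (hβ : β ∈ Set.Ioc (0 : ℝ) 1)
    (Q : ℝ)
    (hQ : Q = ⨆ y : {y : EuclideanSpace ℝ (Fin d) // ‖y‖ = 1},
      (∑ i, |(inner ℝ (v i) (y : EuclideanSpace ℝ (Fin d)) : ℝ)| ^ p) ^ (1 / p))
    (hQpos : 0 < Q) :
    ∃ τ : ℝ, τ ∈ Set.Ioc (0 : ℝ) 1 ∧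
      ∀ x : EuclideanSpace ℝ (Fin d), ‖x‖ = 1 →
        (∑ i, if α * τ ≤ (inner ℝ (v i) x : ℝ) ^ 2 then (inner ℝ (v i) x : ℝ) ^ 2 else 0)
          ≥ β * (⨆ y : {y : EuclideanSpace ℝ (Fin d) // ‖y‖ = 1},
              ∑ i, if τ ≤ (inner ℝ (v i) (y : EuclideanSpace ℝ (Fin d)) : ℝ) ^ 2
                then (inner ℝ (v i) (y : EuclideanSpace ℝ (Fin d)) : ℝ) ^ 2 else 0) →
        ∑ i, |(inner ℝ (v i) x : ℝ)| ^ p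
          ≥ α ^ ((p - 2) / 2) * β * Q ^ p / (2 ^ (p / 2 + 1) * (Real.logb 2 n + 1)) :=
  stmt_13_general p hp n d hd v hv α β hα hβ Q hQ hQpos
end

section
/- Let p ≥ 2, let n, d ≥ 1, let v_1,…,v_n ∈ ℝ^d satisfy ‖v_i‖ ≤ 1, let x₀ ∈ ℝ^d be a unit vector, and suppose S := Σ_{i=1}^n |⟨v_i, x₀⟩|^p > 0. Then there exists τ ∈ (0,1] such that sup over unit vectors y ∈ ℝ^d of Σ_{i : ⟨v_i,y⟩² ≥ τ} ⟨v_i,y⟩² ≥ S·τ / (2 (log₂ n + 1) (2τ)^{p/2}). -/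
/-!
Write `w i = ⟪v i, x₀⟫²`, so that `S = ∑ i, w i ^ (p/2)`. If every index `j` satisfied
`#{i | w j ≤ w i} · w j ^ (p/2) ≤ M`, then peeling off the smallest weights one at a time
would give `S ≤ H_n · M`, with `H_n ≤ log₂ n + 1` the harmonic number. So some `j` has
`S ≤ (log₂ n + 1) · #{i | τ ≤ w i} · τ ^ (p/2)` for `τ = w j`, and already `y = x₀` collects
`τ` from each of those indices in the `τ`-truncated sum. The factor `(2τ)^(p/2) ≥ 2 τ^(p/2)`
(as `p ≥ 2`) leaves room to spare.
-/

open Finset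

section

variable {ι : Type*}

theorem sum_le_harmonic_mul_of_rank_bound [DecidableEq ι] (a : ι → ℝ) (s : Finset ι)
    (ha : ∀ i ∈ s, 0 ≤ a i) (M : ℝ) (hM : ∀ j ∈ s, #{i ∈ s | a j ≤ a i} * a j ≤ M) :
    ∑ i ∈ s, a i ≤ harmonic #s * M := by
  induction s using Finset.induction_on_min_value a with
  | empty => simp
  | insert m s hms hmin ih =>
    have hs : ∑ i ∈ s, a i ≤ harmonic #s * M := by
      refine ih (fun i hi ↦ ha i (mem_insert_of_mem hi)) fun j hj ↦
        le_trans ?_ (hM j (mem_insert_of_mem hj))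
      gcongr
      · exact ha j (mem_insert_of_mem hj)
      · exact subset_insert m s
    have hm : (#s + 1 : ℝ) * a m ≤ M := by
      have hall : {i ∈ insert m s | a m ≤ a i} = insert m s :=
        filter_true_of_mem fun i hi ↦ (mem_insert.mp hi).elim (· ▸ le_rfl) (hmin i)
      simpa [hall, card_insert_of_notMem hms] using hM m (mem_insert_self m s)
    rw [sum_insert hms, card_insert_of_notMem hms, harmonic_succ]
    push_cast
    rw [← le_div_iff₀' (by positivity)] at hm
    linarith [show M / (#s + 1 : ℝ) = (#s + 1 : ℝ)⁻¹ * M by ring]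

theorem exists_sum_le_harmonic_mul_card_mul [Fintype ι] [Nonempty ι] (a : ι → ℝ)
    (ha : ∀ i, 0 ≤ a i) :
    ∃ j, ∑ i, a i ≤ harmonic (Fintype.card ι) * (#{i | a j ≤ a i} * a j) := by
  classical
  obtain ⟨j, -, hj⟩ :=
    exists_max_image univ (fun j ↦ (#{i | a j ≤ a i} : ℝ) * a j) univ_nonempty
  exact ⟨j, sum_le_harmonic_mul_of_rank_bound a univ (fun i _ ↦ ha i) _ hj⟩

theorem exists_sum_rpow_le_harmonic_mul_card_mul [Fintype ι] [Nonempty ι] (w : ι → ℝ)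
    (hw : ∀ i, 0 ≤ w i) {q : ℝ} (hq : 0 < q) :
    ∃ j, ∑ i, w i ^ q ≤ harmonic (Fintype.card ι) * (#{i | w j ≤ w i} * w j ^ q) := by
  classical
  obtain ⟨j, hj⟩ :=
    exists_sum_le_harmonic_mul_card_mul (fun i ↦ w i ^ q) fun i ↦ Real.rpow_nonneg (hw i) q
  rw [filter_congr fun i _ ↦ Real.rpow_le_rpow_iff (hw j) (hw i) hq] at hj
  exact ⟨j, hj⟩

theorem card_mul_le_sum_ite_le (w : ι → ℝ) (s : Finset ι) (τ : ℝ) :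
    #{i ∈ s | τ ≤ w i} * τ ≤ ∑ i ∈ s, if τ ≤ w i then w i else 0 := by
  rw [← sum_filter, ← nsmul_eq_mul]
  exact card_nsmul_le_sum _ _ _ fun i hi ↦ (mem_filter.mp hi).2

theorem inner_sq_le_sq_norm_of_norm_eq_one {E : Type*} [NormedAddCommGroup E]
    [InnerProductSpace ℝ E] (v : E) {y : E} (hy : ‖y‖ = 1) : inner ℝ v y ^ 2 ≤ ‖v‖ ^ 2 := by
  simpa [hy] using pow_le_pow_left₀ (abs_nonneg _) (abs_real_inner_le_norm v y) 2

theorem bddAbove_range_sum_ite_inner_sq {E : Type*} [NormedAddCommGroup E]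
    [InnerProductSpace ℝ E] [Fintype ι] (v : ι → E) (τ : ℝ) :
    BddAbove (Set.range fun y : {y : E // ‖y‖ = 1} ↦
      ∑ i, if τ ≤ inner ℝ (v i) (y : E) ^ 2 then inner ℝ (v i) (y : E) ^ 2 else 0) := by
  refine ⟨∑ i, ‖v i‖ ^ 2, ?_⟩
  rintro _ ⟨y, rfl⟩
  refine sum_le_sum fun i _ ↦ ?_
  split_ifs
  · exact inner_sq_le_sq_norm_of_norm_eq_one (v i) y.2
  · positivity

end

theorem Real.abs_rpow_eq_sq_rpow_half (x p : ℝ) : |x| ^ p = (x ^ 2) ^ (p / 2) := by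
  rw [← sq_abs, ← Real.rpow_two, ← Real.rpow_mul (abs_nonneg x), mul_div_cancel₀ p two_ne_zero]

theorem Real.log_natCast_le_logb_two (n : ℕ) : Real.log n ≤ Real.logb 2 n := by
  rw [Real.logb, le_div_iff₀ (Real.log_pos one_lt_two)]
  exact mul_le_of_le_one_right (Real.log_natCast_nonneg n)
    ((Real.log_le_sub_one_of_pos two_pos).trans (by norm_num))

theorem harmonic_le_logb_two_add_one (n : ℕ) : (harmonic n : ℝ) ≤ Real.logb 2 n + 1 := by
  linarith [harmonic_le_one_add_log n, Real.log_natCast_le_logb_two n]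

theorem mul_div_le_of_le_mul_card_mul_rpow {S L N τ p : ℝ} (hp : 2 ≤ p) (hτ : 0 < τ)
    (hL : 0 < L) (hN : 0 ≤ N) (hS : S ≤ L * (N * τ ^ (p / 2))) :
    S * τ / (2 * L * (2 * τ) ^ (p / 2)) ≤ N * τ := by
  have h2 : 2 * τ ^ (p / 2) ≤ (2 * τ) ^ (p / 2) := by
    rw [Real.mul_rpow zero_le_two hτ.le]
    gcongr
    simpa using Real.self_le_rpow_of_one_le one_le_two (by linarith : 1 ≤ p / 2)
  rw [div_le_iff₀ (by positivity)]
  have hNτL : 0 ≤ N * τ * L := by positivity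
  calc S * τ ≤ L * (N * τ ^ (p / 2)) * τ := by gcongr
    _ ≤ N * τ * (2 * L * (2 * τ) ^ (p / 2)) := by
        nlinarith [mul_le_mul_of_nonneg_left h2 hNτL, Real.rpow_nonneg hτ.le (p / 2)]

theorem stmt_14_general (p : ℝ) (hp : 2 ≤ p) (n d : ℕ)
    (v : Fin n → EuclideanSpace ℝ (Fin d)) (hv : ∀ i, ‖v i‖ ≤ 1)
    (x0 : EuclideanSpace ℝ (Fin d)) (hx0 : ‖x0‖ = 1)
    (S : ℝ) (hS : S = ∑ i, |(inner ℝ (v i) x0 : ℝ)| ^ p) (hSpos : 0 < S) :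
    ∃ τ : ℝ, τ ∈ Set.Ioc (0 : ℝ) 1 ∧
      (⨆ y : {y : EuclideanSpace ℝ (Fin d) // ‖y‖ = 1},
        ∑ i, if τ ≤ (inner ℝ (v i) (y : EuclideanSpace ℝ (Fin d)) : ℝ) ^ 2
          then (inner ℝ (v i) (y : EuclideanSpace ℝ (Fin d)) : ℝ) ^ 2 else 0)
        ≥ S * τ / (2 * (Real.logb 2 n + 1) * (2 * τ) ^ (p / 2)) := by
  classical
  have : Nonempty (Fin n) := not_isEmpty_iff.mp fun _ ↦ by simp [hS] at hSpos
  set w : Fin n → ℝ := fun i ↦ inner ℝ (v i) x0 ^ 2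
  have hSw : S = ∑ i, w i ^ (p / 2) := by simp only [hS, w, Real.abs_rpow_eq_sq_rpow_half]
  obtain ⟨j, hj⟩ :=
    exists_sum_rpow_le_harmonic_mul_card_mul w (fun i ↦ sq_nonneg _) (by linarith : 0 < p / 2)
  rw [← hSw, Fintype.card_fin] at hj
  set τ := w j
  have hτ : 0 < τ := by
    refine (show 0 ≤ τ from sq_nonneg _).lt_of_ne fun h ↦ ?_
    rw [← h, Real.zero_rpow (by linarith), mul_zero, mul_zero] at hj
    linarith
  have hτ1 : τ ≤ 1 :=
    (inner_sq_le_sq_norm_of_norm_eq_one (v j) hx0).trans (pow_le_one₀ (norm_nonneg _) (hv j))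
  have hL : 0 < Real.logb 2 n + 1 := by
    linarith [Real.log_natCast_nonneg n, Real.log_natCast_le_logb_two n]
  refine ⟨τ, ⟨hτ, hτ1⟩, ?_⟩
  calc S * τ / (2 * (Real.logb 2 n + 1) * (2 * τ) ^ (p / 2)) ≤ #{i | τ ≤ w i} * τ :=
        mul_div_le_of_le_mul_card_mul_rpow hp hτ hL (by positivity)
          (hj.trans (by gcongr; exact harmonic_le_logb_two_add_one n))
    _ ≤ _ := card_mul_le_sum_ite_le w univ τ
    _ ≤ _ := le_ciSup (bddAbove_range_sum_ite_inner_sq v τ) ⟨x0, hx0⟩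

/-- Level-set pigeonhole bound: from a unit vector `x₀` with ℓ_p correlation mass
`S`, some threshold `τ ∈ (0,1]` gives a τ-TC optimum of at least
`S τ / (2 (log₂ n + 1) (2τ)^{p/2})`. -/
theorem stmt_14 (p : ℝ) (hp : 2 ≤ p) (n d : ℕ) (hn : 1 ≤ n) (hd : 1 ≤ d)
    (v : Fin n → EuclideanSpace ℝ (Fin d)) (hv : ∀ i, ‖v i‖ ≤ 1)
    (x0 : EuclideanSpace ℝ (Fin d)) (hx0 : ‖x0‖ = 1)
    (S : ℝ) (hS : S = ∑ i, |(inner ℝ (v i) x0 : ℝ)| ^ p) (hSpos : 0 < S) :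
    ∃ τ : ℝ, τ ∈ Set.Ioc (0 : ℝ) 1 ∧
      (⨆ y : {y : EuclideanSpace ℝ (Fin d) // ‖y‖ = 1},
        ∑ i, if τ ≤ (inner ℝ (v i) (y : EuclideanSpace ℝ (Fin d)) : ℝ) ^ 2
          then (inner ℝ (v i) (y : EuclideanSpace ℝ (Fin d)) : ℝ) ^ 2 else 0)
        ≥ S * τ / (2 * (Real.logb 2 n + 1) * (2 * τ) ^ (p / 2)) :=
  stmt_14_general p hp n d v hv x0 hx0 S hS hSpos
end
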